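/- DecQN bias reduction: with γ ∈ [0,1] and b > 0, for natural numbers n_1, ..., n_N ≥ 2, the quantity (γb/N) Σ_{i=1}^N (n_i-1)/(n_i+1) is at most γb(∏ n_i - 1)/(∏ n_i + 1). Equivalently, E[Z^dec] ≤ E[Z^dqn], where Z^dec and Z^dqn are the DecQN and DQN target differences under i.i.d. Uniform(-b,b) approximation noise. -/

import Mathlib

open Finset
open scoped BigOperators

theorem sub_one_div_add_one_le_of_le {K : Type*} [Field K] [LinearOrder K] [IsStrictOrderedRing K]
    {x y : K} (hx : -1 < x) (hxy : x ≤ y) : (x - 1) / (x + 1) ≤ (y - 1) / (y + 1) := by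
  rw [div_le_div_iff₀ (by linarith) (by linarith)]
  nlinarith

theorem Finset.natCast_le_prod_of_one_le {ι R : Type*} [CommSemiring R] [PartialOrder R]
    [IsOrderedRing R] {s : Finset ι} {n : ι → ℕ} (hn : ∀ j ∈ s, 1 ≤ n j) {i : ι} (hi : i ∈ s) :
    (n i : R) ≤ ∏ j ∈ s, (n j : R) := by
  rw [← Nat.cast_prod]
  exact Nat.mono_cast (single_le_prod' hn hi)

theorem decqn_bias_reduction_general (γ b : ℝ) (hγ0 : 0 ≤ γ) (hb : 0 < b)
    (N : ℕ) (hN : 1 ≤ N) (n : Fin N → ℕ) (hn : ∀ i, 2 ≤ n i) :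
    γ * b / (N : ℝ) * ∑ i, ((n i : ℝ) - 1) / ((n i : ℝ) + 1)
      ≤ γ * b * (((∏ i, (n i : ℝ)) - 1) / ((∏ i, (n i : ℝ)) + 1)) := by
  have hdec : γ * b / (N : ℝ) * ∑ i, ((n i : ℝ) - 1) / ((n i : ℝ) + 1)
      = γ * b * 𝔼 i, ((n i : ℝ) - 1) / ((n i : ℝ) + 1) := by
    rw [Fintype.expect_eq_sum_div_card, Fintype.card_fin]
    ring
  have : Nonempty (Fin N) := ⟨⟨0, hN⟩⟩
  rw [hdec]
  gcongr
  refine expect_le univ_nonempty fun i _ ↦ sub_one_div_add_one_le_of_le ?_ ?_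
  · linarith [(n i).cast_nonneg (α := ℝ)]
  · exact natCast_le_prod_of_one_le (fun j _ ↦ (hn j).trans' one_le_two) (mem_univ i)

/-- DecQN bias reduction: `E[Z^dec] ≤ E[Z^dqn]` where
`E[Z^dec] = (γ b / N) ∑ (nᵢ-1)/(nᵢ+1)` and `E[Z^dqn] = γ b (M-1)/(M+1)`, `M = ∏ nᵢ`. -/
theorem decqn_bias_reduction (γ b : ℝ) (hγ0 : 0 ≤ γ) (hγ1 : γ ≤ 1) (hb : 0 < b)
    (N : ℕ) (hN : 1 ≤ N) (n : Fin N → ℕ) (hn : ∀ i, 2 ≤ n i) :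
    γ * b / (N : ℝ) * ∑ i, ((n i : ℝ) - 1) / ((n i : ℝ) + 1)
      ≤ γ * b * (((∏ i, (n i : ℝ)) - 1) / ((∏ i, (n i : ℝ)) + 1)) :=
  decqn_bias_reduction_general γ b hγ0 hb N hN n hn
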